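/- arXiv:1905.07498 — 2 statements merged into one kernel-verified Lean document; each statement's English description precedes it below -/
import Mathlib

section
/- (Theorem 2, compact support case.) Let K : ℝ → ℝ be a smoothing kernel with bound M, let ν > 0, and set h_ν(x) = (1/ν)·K(x/ν). Assume h_ν is continuous on ℝ and has compact support. Then the function F : (0,∞) → ℝ defined by F(σ) = sup_{x ∈ ℝ} V_ν(x,σ) attains a global maximum on (0,∞); i.e., there exists σ* ∈ (0,∞) such that F(σ) ≤ F(σ*) for all σ ∈ (0,∞). -/
/-!
Write `g = h_ν` and `G(σ, x) = Var[g(x - σU)]` with `U` a standard Gaussian. `G` is continuous on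
the whole plane, vanishes on the axis `σ = 0`, and tends to `0` at infinity: for large `|σ|` because
the Gaussian density is bounded by `1/√(2π)`, so that `E[g(x - σU)²] ≤ ‖g‖₂² / (√(2π) |σ|)`, and
for bounded `σ` and large `|x|` by dominated convergence, since `g` has compact support. Hence `G`
attains its maximum over the closed half-plane `σ ≥ 0`, at a point with `σ > 0` unless `G` vanishes
identically, and that point maximises `σ ↦ sup_x V_ν(x, σ)`.
-/

open MeasureTheory ProbabilityTheory Real Filter

/-- The short-exposure PSF `h_ν(x) = (1/ν) K(x/ν)`. -/
noncomputable def shortPSF (K : ℝ → ℝ) (ν : ℝ) (x : ℝ) : ℝ := (1 / ν) * K (x / ν)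

/-- `V_ν(x,σ) = Var[h_ν(x-Θ)] = E[h_ν(x-Θ)²] − (E[h_ν(x-Θ)])²` where `Θ ~ N(0,σ²)`. -/
noncomputable def Vnu (K : ℝ → ℝ) (ν σ x : ℝ) : ℝ :=
  (∫ θ, (shortPSF K ν (x - θ)) ^ 2 ∂(gaussianReal 0 (σ ^ 2).toNNReal))
    - (∫ θ, shortPSF K ν (x - θ) ∂(gaussianReal 0 (σ ^ 2).toNNReal)) ^ 2

open Topology

lemma gaussianPDFReal_le (μ : ℝ) (v : NNReal) (x : ℝ) :
    gaussianPDFReal μ v x ≤ (√(2 * π * v))⁻¹ := by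
  rw [gaussianPDFReal_def]
  refine mul_le_of_le_one_right (by positivity) (exp_le_one_iff.2 ?_)
  rw [neg_div]
  exact neg_nonpos.2 (by positivity)

lemma gaussianReal_zero_sq_eq_map (σ : ℝ) :
    gaussianReal 0 (σ ^ 2).toNNReal = (gaussianReal 0 1).map (σ * ·) := by
  rw [gaussianReal_map_const_mul, mul_zero, mul_one]
  congr
  exact Real.toNNReal_of_nonneg (sq_nonneg σ)

section GaussianSmoothing

variable {f g : ℝ → ℝ}

lemma integral_gaussianReal_comp_sub_mul_le (hf0 : 0 ≤ f) (hf : Integrable f) {σ : ℝ}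
    (hσ : σ ≠ 0) (x : ℝ) :
    ∫ u, f (x - σ * u) ∂gaussianReal 0 1 ≤ (∫ y, f y) / √(2 * π) / |σ| := by
  have hint : Integrable (fun u => f (x - σ * u)) := (hf.comp_sub_left x).comp_mul_left' hσ
  calc ∫ u, f (x - σ * u) ∂gaussianReal 0 1 = ∫ u, gaussianPDFReal 0 1 u * f (x - σ * u) :=
        integral_gaussianReal_eq_integral_smul one_ne_zero
    _ ≤ ∫ u, (√(2 * π))⁻¹ * f (x - σ * u) := by
        refine integral_mono_of_nonneg
          (ae_of_all _ fun u => mul_nonneg (gaussianPDFReal_nonneg _ _ _) (hf0 _))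
          (hint.const_mul _) (ae_of_all _ fun u => ?_)
        simpa using mul_le_mul_of_nonneg_right (gaussianPDFReal_le 0 1 u) (hf0 (x - σ * u))
    _ = (∫ y, f y) / √(2 * π) / |σ| := by
        rw [integral_const_mul, Measure.integral_comp_mul_left (fun y => f (x - y)),
          integral_sub_left_eq_self, abs_inv, smul_eq_mul]
        ring

lemma continuous_integral_comp_sub_mul (μ : Measure ℝ) [IsFiniteMeasure μ] (hf : Continuous f)
    {C : ℝ} (hC : ∀ y, ‖f y‖ ≤ C) :
    Continuous fun p : ℝ × ℝ => ∫ u, f (p.2 - p.1 * u) ∂μ :=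
  continuous_of_dominated
    (fun p => (by fun_prop : Continuous fun u => f (p.2 - p.1 * u)).aestronglyMeasurable)
    (fun p => ae_of_all _ fun u => hC _) (integrable_const C) (ae_of_all _ fun u => by fun_prop)

lemma tendsto_integral_comp_sub_mul_principal_prod_cocompact (μ : Measure ℝ) [IsFiniteMeasure μ]
    (hf : Continuous f) {C : ℝ} (hC : ∀ y, ‖f y‖ ≤ C) (hf0 : Tendsto f (cocompact ℝ) (𝓝 0))
    (b : ℝ) :
    Tendsto (fun p : ℝ × ℝ => ∫ u, f (p.2 - p.1 * u) ∂μ)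
      (𝓟 (Metric.closedBall 0 b) ×ˢ cocompact ℝ) (𝓝 0) := by
  have : (cocompact ℝ).IsCountablyGenerated := by
    have := comap.isCountablyGenerated atTop (norm : ℝ → ℝ)
    rwa [comap_norm_atTop, Metric.cobounded_eq_cocompact] at this
  have hshift (u : ℝ) : Tendsto (fun p : ℝ × ℝ => p.2 - p.1 * u)
      (𝓟 (Metric.closedBall 0 b) ×ˢ cocompact ℝ) (cocompact ℝ) := by
    have hnorm : Tendsto (fun p : ℝ × ℝ => |p.2| - b * |u|)
        (𝓟 (Metric.closedBall 0 b) ×ˢ cocompact ℝ) atTop :=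
      tendsto_atTop_add_const_right _ _ (tendsto_norm_cocompact_atTop.comp tendsto_snd)
    refine tendsto_cocompact_of_tendsto_dist_comp_atTop 0 (tendsto_atTop_mono' _ ?_ hnorm)
    filter_upwards [prod_mem_prod (mem_principal_self _) univ_mem] with p hp
    have hσ : |p.1| ≤ b := by simpa using hp.1
    have := abs_sub_abs_le_abs_sub p.2 (p.1 * u)
    rw [abs_mul] at this
    simp only [Real.dist_eq, sub_zero]
    nlinarith [abs_nonneg u]
  have hmeas (p : ℝ × ℝ) : AEStronglyMeasurable (fun u => f (p.2 - p.1 * u)) μ :=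
    (by fun_prop : Continuous fun u => f (p.2 - p.1 * u)).aestronglyMeasurable
  simpa using tendsto_integral_filter_of_dominated_convergence (fun _ => C)
    (Eventually.of_forall hmeas) (Eventually.of_forall fun p => ae_of_all _ fun u => hC _)
    (integrable_const C) (ae_of_all _ fun u => hf0.comp (hshift u))

lemma tendsto_integral_gaussianReal_comp_sub_mul_cocompact (hf : Continuous f)
    (hfs : HasCompactSupport f) :
    Tendsto (fun p : ℝ × ℝ => ∫ u, f (p.2 - p.1 * u) ∂gaussianReal 0 1)
      (cocompact (ℝ × ℝ)) (𝓝 0) := by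
  obtain ⟨C, hC⟩ := hf.bounded_above_of_compact_support hfs
  refine Metric.tendsto_nhds.2 fun ε hε => ?_
  set A := (∫ y, ‖f y‖) / √(2 * π)
  have hA : 0 ≤ A := by positivity
  have hlarge {σ : ℝ} (hσ : σ ≠ 0) (x : ℝ) : ‖∫ u, f (x - σ * u) ∂gaussianReal 0 1‖ ≤ A / |σ| :=
    (norm_integral_le_integral_norm _).trans <| integral_gaussianReal_comp_sub_mul_le
      (fun y => norm_nonneg (f y)) (hf.integrable_of_hasCompactSupport hfs).norm hσ x
  obtain ⟨b, hAb⟩ := exists_gt (A / ε)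
  have hb : 0 < b := (div_nonneg hA hε.le).trans_lt hAb
  rw [div_lt_iff₀ hε] at hAb
  have hbounded := tendsto_integral_comp_sub_mul_principal_prod_cocompact (gaussianReal 0 1) hf hC
    hfs.is_zero_at_infty b
  obtain ⟨t₁, ht₁, t₂, ht₂, hsub⟩ :=
    mem_prod_iff.1 <| hbounded.eventually (Metric.ball_mem_nhds 0 hε)
  obtain ⟨L, hL, hLt₂⟩ := mem_cocompact.1 ht₂
  refine mem_cocompact.2 ⟨Metric.closedBall 0 b ×ˢ L, (isCompact_closedBall 0 b).prod hL,
    fun p hp => ?_⟩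
  by_cases hσ : p.1 ∈ Metric.closedBall 0 b
  · exact hsub ⟨mem_principal.1 ht₁ hσ, hLt₂ fun hx => hp ⟨hσ, hx⟩⟩
  · have hbσ : b < |p.1| := by simpa using hσ
    have hσ0 : p.1 ≠ 0 := abs_pos.1 (hb.trans hbσ)
    simp only [Set.mem_ofPred_eq, Real.dist_eq, sub_zero]
    calc |∫ u, f (p.2 - p.1 * u) ∂gaussianReal 0 1| ≤ A / |p.1| := hlarge hσ0 p.2
      _ < ε := by rw [div_lt_iff₀ (abs_pos.2 hσ0)]; nlinarith

end GaussianSmoothing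

-- Parametrising the jitter as `σ U` with `U` standard Gaussian, rather than by the law
-- `N(0, σ²)`, makes `(σ, x) ↦ jitterVariance g σ x` jointly continuous on all of `ℝ × ℝ`.
noncomputable def jitterVariance (g : ℝ → ℝ) (σ x : ℝ) : ℝ :=
  Var[fun u => g (x - σ * u); gaussianReal 0 1]

section JitterVariance

variable {g : ℝ → ℝ}

lemma jitterVariance_eq_sub (hg : Continuous g) {C : ℝ} (hC : ∀ y, ‖g y‖ ≤ C) (σ x : ℝ) :
    jitterVariance g σ x =
      ∫ u, g (x - σ * u) ^ 2 ∂gaussianReal 0 1 - (∫ u, g (x - σ * u) ∂gaussianReal 0 1) ^ 2 :=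
  variance_eq_sub <| MemLp.of_bound
    (by fun_prop : Continuous fun u => g (x - σ * u)).aestronglyMeasurable C
    (ae_of_all _ fun _ => hC _)

@[simp]
lemma jitterVariance_zero_left (g : ℝ → ℝ) (x : ℝ) : jitterVariance g 0 x = 0 := by
  simp [jitterVariance, variance, evariance]

lemma jitterVariance_le_integral_sq (hg : Measurable g) (σ x : ℝ) :
    jitterVariance g σ x ≤ ∫ u, g (x - σ * u) ^ 2 ∂gaussianReal 0 1 :=
  variance_le_expectation_sq (by fun_prop : Measurable fun u => g (x - σ * u)).aestronglyMeasurable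

lemma continuous_jitterVariance (hg : Continuous g) {C : ℝ} (hC : ∀ y, ‖g y‖ ≤ C) :
    Continuous fun p : ℝ × ℝ => jitterVariance g p.1 p.2 := by
  have hC2 (y : ℝ) : ‖g y ^ 2‖ ≤ C ^ 2 := by
    rw [norm_pow]; exact pow_le_pow_left₀ (norm_nonneg _) (hC y) 2
  simp_rw [jitterVariance_eq_sub hg hC]
  exact (continuous_integral_comp_sub_mul _ (hg.pow 2) hC2).sub
    ((continuous_integral_comp_sub_mul _ hg hC).pow 2)

lemma tendsto_jitterVariance_cocompact (hg : Continuous g) (hgs : HasCompactSupport g) :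
    Tendsto (fun p : ℝ × ℝ => jitterVariance g p.1 p.2) (cocompact (ℝ × ℝ)) (𝓝 0) := by
  have hgs2 : HasCompactSupport fun y => g y ^ 2 :=
    hgs.comp_left (g := fun t : ℝ => t ^ 2) (by simp)
  exact squeeze_zero (fun _ => variance_nonneg _ _)
    (fun p => jitterVariance_le_integral_sq hg.measurable p.1 p.2)
    (tendsto_integral_gaussianReal_comp_sub_mul_cocompact (f := fun y => g y ^ 2) (hg.pow 2) hgs2)

lemma exists_forall_jitterVariance_le (hg : Continuous g) (hgs : HasCompactSupport g) :
    ∃ σ > 0, ∃ x, ∀ τ > 0, ∀ y, jitterVariance g τ y ≤ jitterVariance g σ x := by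
  by_cases hzero : ∀ τ > 0, ∀ y, jitterVariance g τ y ≤ 0
  · exact ⟨1, one_pos, 0, fun τ hτ y => (hzero τ hτ y).trans (variance_nonneg _ _)⟩
  push Not at hzero
  obtain ⟨σ₀, hσ₀, x₀, hpos⟩ := hzero
  obtain ⟨C, hC⟩ := hg.bounded_above_of_compact_support hgs
  obtain ⟨p, hp, hmax⟩ := (continuous_jitterVariance hg hC).continuousOn.exists_isMaxOn'
    (isClosed_Ici.prod isClosed_univ) (x₀ := (σ₀, x₀)) ⟨hσ₀.le, trivial⟩
    (((tendsto_jitterVariance_cocompact hg hgs).eventually_le_const hpos).filter_mono inf_le_left)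
  have hle (τ : ℝ) (hτ : 0 ≤ τ) (y : ℝ) : jitterVariance g τ y ≤ jitterVariance g p.1 p.2 :=
    isMaxOn_iff.1 hmax (τ, y) ⟨hτ, trivial⟩
  have hp0 : p.1 ≠ 0 := fun h => by
    have := hle σ₀ hσ₀.le x₀
    rw [h, jitterVariance_zero_left] at this
    linarith
  exact ⟨p.1, lt_of_le_of_ne hp.1 (Ne.symm hp0), p.2, fun τ hτ y => hle τ hτ.le y⟩

end JitterVariance

lemma Vnu_eq_jitterVariance {K : ℝ → ℝ} {ν : ℝ} (hg : Continuous (shortPSF K ν)) {C : ℝ}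
    (hC : ∀ y, ‖shortPSF K ν y‖ ≤ C) (σ x : ℝ) :
    Vnu K ν σ x = jitterVariance (shortPSF K ν) σ x := by
  have hσ : Measurable (σ * ·) := measurable_const_mul σ
  rw [Vnu, gaussianReal_zero_sq_eq_map, integral_map hσ.aemeasurable (by fun_prop),
    integral_map hσ.aemeasurable (by fun_prop), jitterVariance_eq_sub hg hC]

theorem supVar_attains_max_of_compactSupport_general
    (K : ℝ → ℝ) (ν : ℝ)
    (hcont : Continuous (shortPSF K ν)) (hsupp : HasCompactSupport (shortPSF K ν)) :
    ∃ σstar ∈ Set.Ioi (0 : ℝ),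
      ∀ σ ∈ Set.Ioi (0 : ℝ), (⨆ x : ℝ, Vnu K ν σ x) ≤ ⨆ x : ℝ, Vnu K ν σstar x := by
  obtain ⟨C, hC⟩ := hcont.bounded_above_of_compact_support hsupp
  simp_rw [Vnu_eq_jitterVariance hcont hC]
  obtain ⟨σ₀, hσ₀, x₀, hmax⟩ := exists_forall_jitterVariance_le hcont hsupp
  have hbdd : BddAbove (Set.range (jitterVariance (shortPSF K ν) σ₀)) :=
    ⟨_, Set.forall_mem_range.2 (hmax σ₀ hσ₀)⟩
  exact ⟨σ₀, hσ₀, fun σ hσ => ciSup_le fun x => (hmax σ hσ x).trans (le_ciSup hbdd x₀)⟩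

theorem supVar_attains_max_of_compactSupport
    (K : ℝ → ℝ) (M ν : ℝ) (hν : 0 < ν)
    (hK0 : ∀ x, 0 ≤ K x) (hKM : ∀ x, K x ≤ M)
    (hKeven : ∀ x, K (-x) = K x) (hKint : Integrable K)
    (hcont : Continuous (shortPSF K ν)) (hsupp : HasCompactSupport (shortPSF K ν)) :
    ∃ σstar ∈ Set.Ioi (0 : ℝ),
      ∀ σ ∈ Set.Ioi (0 : ℝ), (⨆ x : ℝ, Vnu K ν σ x) ≤ ⨆ x : ℝ, Vnu K ν σstar x :=
  supVar_attains_max_of_compactSupport_general K ν hcont hsupp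
end

section
/- Let K : ℝ → ℝ be a smoothing kernel with bound M, let ν > 0, and set h_ν(x) = (1/ν)·K(x/ν). Assume h_ν is Lipschitz continuous on ℝ. Then sup_{x ∈ ℝ} V_ν(x,σ) → 0 as σ → ∞. -/
/-!
The variance of `h_ν(x - Θ)` is at most its second moment, and since `0 ≤ h_ν ≤ M/ν` the
second moment is at most `(M/ν) · E[h_ν(x - Θ)]`. The Gaussian density is bounded by
`1/(σ√(2π))`, so `E[h_ν(x - Θ)] ≤ ‖K‖₁/(σ√(2π))` uniformly in `x`. Hence
`sup_x V_ν(x,σ) = O(1/σ)`.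
-/

open MeasureTheory ProbabilityTheory Real Filter
open scoped ENNReal NNReal

namespace ProbabilityTheory

lemma gaussianPDFReal_le (μ : ℝ) (v : ℝ≥0) (x : ℝ) :
    gaussianPDFReal μ v x ≤ (√(2 * π * v))⁻¹ := by
  refine mul_le_of_le_one_right (by positivity) (exp_le_one_iff.2 ?_)
  have : 0 ≤ (x - μ) ^ 2 / (2 * v) := by positivity
  rw [neg_div]
  linarith

lemma integral_gaussianReal_le_of_nonneg {μ : ℝ} {v : ℝ≥0} (hv : v ≠ 0) {f : ℝ → ℝ}
    (hf0 : 0 ≤ f) (hf : Integrable f) :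
    ∫ x, f x ∂gaussianReal μ v ≤ (√(2 * π * v))⁻¹ * ∫ x, f x := by
  rw [integral_gaussianReal_eq_integral_smul hv, ← integral_const_mul]
  refine integral_mono_of_nonneg (ae_of_all _ fun x => ?_) (hf.const_mul _)
    (ae_of_all _ fun x => ?_)
  · exact smul_nonneg (gaussianPDFReal_nonneg _ _ _) (hf0 x)
  · exact mul_le_mul_of_nonneg_right (gaussianPDFReal_le _ _ _) (hf0 x)

end ProbabilityTheory

lemma integral_sq_le_mul_integral {Ω : Type*} [MeasurableSpace Ω] {μ : Measure Ω}
    [IsFiniteMeasure μ] {X : Ω → ℝ} {B : ℝ} (hX : AEStronglyMeasurable X μ)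
    (h0 : ∀ᵐ ω ∂μ, 0 ≤ X ω) (hB : ∀ᵐ ω ∂μ, X ω ≤ B) :
    ∫ ω, X ω ^ 2 ∂μ ≤ B * ∫ ω, X ω ∂μ := by
  have hXint : Integrable X μ := Integrable.of_bound hX B <| by
    filter_upwards [h0, hB] with ω h0 hB
    rwa [Real.norm_of_nonneg h0]
  have hX2int : Integrable (fun ω => X ω ^ 2) μ := Integrable.of_bound (hX.pow 2) (B ^ 2) <| by
    filter_upwards [h0, hB] with ω h0 hB
    rw [Real.norm_of_nonneg (sq_nonneg _)]
    exact pow_le_pow_left₀ h0 hB 2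
  rw [← integral_const_mul]
  refine integral_mono_ae hX2int (hXint.const_mul B) ?_
  filter_upwards [h0, hB] with ω h0 hB
  nlinarith

section shortPSF

variable {K : ℝ → ℝ} {M ν : ℝ}

lemma shortPSF_nonneg (hν : 0 ≤ ν) (hK0 : ∀ x, 0 ≤ K x) (x : ℝ) : 0 ≤ shortPSF K ν x :=
  mul_nonneg (by positivity) (hK0 _)

lemma shortPSF_le (hν : 0 ≤ ν) (hKM : ∀ x, K x ≤ M) (x : ℝ) : shortPSF K ν x ≤ M / ν := by
  rw [div_eq_inv_mul, ← one_div]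
  exact mul_le_mul_of_nonneg_left (hKM _) (by positivity)

lemma integrable_shortPSF (hK : Integrable K) (hν : ν ≠ 0) : Integrable (shortPSF K ν) :=
  (hK.comp_div hν).const_mul _

lemma integral_shortPSF (hν : 0 < ν) : ∫ x, shortPSF K ν x = ∫ x, K x := by
  simp only [shortPSF]
  rw [integral_const_mul, Measure.integral_comp_div, abs_of_pos hν, smul_eq_mul]
  field_simp

lemma memLp_shortPSF_comp_sub (hν : 0 ≤ ν) (hK0 : ∀ x, 0 ≤ K x) (hKM : ∀ x, K x ≤ M)
    (hc : Continuous (shortPSF K ν)) (x : ℝ) (p : ℝ≥0∞) (μ : Measure ℝ) [IsFiniteMeasure μ] :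
    MemLp (fun θ => shortPSF K ν (x - θ)) p μ :=
  memLp_of_bounded (ae_of_all _ fun _ => ⟨shortPSF_nonneg hν hK0 _, shortPSF_le hν hKM _⟩)
    (hc.comp (continuous_sub_left x)).aestronglyMeasurable p

lemma Vnu_nonneg (hν : 0 ≤ ν) (hK0 : ∀ x, 0 ≤ K x) (hKM : ∀ x, K x ≤ M)
    (hc : Continuous (shortPSF K ν)) (σ x : ℝ) : 0 ≤ Vnu K ν σ x := by
  have h2 := memLp_shortPSF_comp_sub hν hK0 hKM hc x 2 (gaussianReal 0 (σ ^ 2).toNNReal)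
  have hVar := variance_nonneg (fun θ => shortPSF K ν (x - θ)) (gaussianReal 0 (σ ^ 2).toNNReal)
  rwa [variance_eq_sub h2] at hVar

lemma Vnu_le (hν : 0 < ν) (hK0 : ∀ x, 0 ≤ K x) (hKM : ∀ x, K x ≤ M) (hK : Integrable K)
    (hc : Continuous (shortPSF K ν)) {σ : ℝ} (hσ : 0 < σ) (x : ℝ) :
    Vnu K ν σ x ≤ M / ν * ((√(2 * π))⁻¹ * ∫ y, K y) / σ := by
  set μ := gaussianReal 0 (σ ^ 2).toNNReal
  have hv : (σ ^ 2).toNNReal ≠ 0 := by simpa using hσ.ne'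
  have hσ2 : (((σ ^ 2).toNNReal : ℝ≥0) : ℝ) = σ ^ 2 := Real.coe_toNNReal _ (sq_nonneg σ)
  calc Vnu K ν σ x ≤ ∫ θ, shortPSF K ν (x - θ) ^ 2 ∂μ := sub_le_self _ (sq_nonneg _)
    _ ≤ M / ν * ∫ θ, shortPSF K ν (x - θ) ∂μ :=
      integral_sq_le_mul_integral (memLp_shortPSF_comp_sub hν.le hK0 hKM hc x 1 μ).1
        (ae_of_all _ fun _ => shortPSF_nonneg hν.le hK0 _)
        (ae_of_all _ fun _ => shortPSF_le hν.le hKM _)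
    _ ≤ M / ν * ((√(2 * π * (σ ^ 2).toNNReal))⁻¹ * ∫ θ, shortPSF K ν (x - θ)) := by
      refine mul_le_mul_of_nonneg_left ?_
        ((shortPSF_nonneg hν.le hK0 0).trans (shortPSF_le hν.le hKM 0))
      exact integral_gaussianReal_le_of_nonneg hv (fun _ => shortPSF_nonneg hν.le hK0 _)
        ((integrable_shortPSF hK hν.ne').comp_sub_left x)
    _ = M / ν * ((√(2 * π))⁻¹ * ∫ y, K y) / σ := by
      rw [integral_sub_left_eq_self (shortPSF K ν) volume x, integral_shortPSF hν, hσ2,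
        sqrt_mul (by positivity), sqrt_sq hσ.le, mul_inv]
      ring

end shortPSF

theorem supVar_tendsto_zero_atTop_of_lipschitz_general
    (K : ℝ → ℝ) (M ν : ℝ) (hν : 0 < ν)
    (hK0 : ∀ x, 0 ≤ K x) (hKM : ∀ x, K x ≤ M)
    (hKint : Integrable K)
    (L : NNReal) (hLip : LipschitzWith L (shortPSF K ν)) :
    Filter.Tendsto (fun σ : ℝ => ⨆ x : ℝ, Vnu K ν σ x) Filter.atTop (nhds 0) := by
  set C := M / ν * ((√(2 * π))⁻¹ * ∫ y, K y)
  have hbound : ∀ᶠ σ in atTop, ∀ x, Vnu K ν σ x ≤ C / σ :=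
    (eventually_gt_atTop 0).mono fun σ hσ => Vnu_le hν hK0 hKM hKint hLip.continuous hσ
  refine squeeze_zero' ?_ ?_ ((tendsto_const_nhds (x := C)).div_atTop tendsto_id)
  · filter_upwards [hbound] with σ hσ
    exact (Vnu_nonneg hν.le hK0 hKM hLip.continuous σ 0).trans
      (le_ciSup ⟨C / σ, Set.forall_mem_range.2 hσ⟩ 0)
  · filter_upwards [hbound] with σ hσ using ciSup_le hσ

theorem supVar_tendsto_zero_atTop_of_lipschitz
    (K : ℝ → ℝ) (M ν : ℝ) (hν : 0 < ν)
    (hK0 : ∀ x, 0 ≤ K x) (hKM : ∀ x, K x ≤ M)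
    (hKeven : ∀ x, K (-x) = K x) (hKint : Integrable K)
    (L : NNReal) (hLip : LipschitzWith L (shortPSF K ν)) :
    Filter.Tendsto (fun σ : ℝ => ⨆ x : ℝ, Vnu K ν σ x) Filter.atTop (nhds 0) :=
  supVar_tendsto_zero_atTop_of_lipschitz_general K M ν hν hK0 hKM hKint L hLip
end
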